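/- arXiv:2108.09871 — 5 statements merged into one kernel-verified Lean document; each statement's English description precedes it below -/
import Mathlib

section
/- The pair (ℚ₊^× ⋉ ℚ, ℕ^× ⋉ ℕ) is lattice ordered: every element of ℚ₊^× ⋉ ℚ has a least upper bound in ℕ^× ⋉ ℕ with respect to the left-invariant order g ≤ h ⟺ g^{-1}h ∈ ℕ^× ⋉ ℕ. Explicitly, if (a,r) ∈ ℚ₊^× ⋉ ℚ is written as a = d/c and r = k/c with c,d ∈ ℕ^×, k ∈ ℤ, and c minimal, then the least upper bound of (a,r) in ℕ^× ⋉ ℕ is (d, max(0,k)). -/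
/-!
`x ≤ z` means `z = x * (n, m)` with `n ∈ ℕ^×`, `m ∈ ℕ`. The minimal `c` is the lcm of the
denominators of `a` and `r`; if moreover `z ∈ P`, then `n a` and `n r` are integers, so `c ∣ n`.
Writing `n = c q` gives `z = (q d, q k + m) = (d, max 0 k) * (q, q k + m - q max 0 k)`, and the last
entry is `≥ 0` because both `m` and `q k + m = z.2` are.
-/

/-- Multiplication on `G = ℚ₊^× ⋉ ℚ`: `(a,r)(b,s) = (ab, br+s)`. -/
def QposxQ.mul (x y : {a : ℚ // 0 < a} × ℚ) : {a : ℚ // 0 < a} × ℚ :=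
  (⟨x.1.1 * y.1.1, mul_pos x.1.2 y.1.2⟩, y.1.1 * x.2 + y.2)

/-- Inversion on `G`: `(a,r)⁻¹ = (a⁻¹, -a⁻¹ r)`. -/
def QposxQ.inv (x : {a : ℚ // 0 < a} × ℚ) : {a : ℚ // 0 < a} × ℚ :=
  (⟨x.1.1⁻¹, inv_pos.mpr x.1.2⟩, -(x.1.1⁻¹ * x.2))

/-- Membership in the positive cone `P = ℕ^× ⋉ ℕ`. -/
def QposxQ.memP (x : {a : ℚ // 0 < a} × ℚ) : Prop :=
  (∃ n : ℕ+, ((n : ℕ) : ℚ) = x.1.1) ∧ ∃ m : ℕ, (m : ℚ) = x.2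

/-- The left-invariant order: `g ≤ h` iff `g⁻¹ h ∈ P`. -/
def QposxQ.le (x y : {a : ℚ // 0 < a} × ℚ) : Prop :=
  QposxQ.memP (QposxQ.mul (QposxQ.inv x) y)

theorem Rat.den_dvd_iff_exists_intCast_eq_mul (q : ℚ) (n : ℕ) :
    q.den ∣ n ↔ ∃ k : ℤ, (k : ℚ) = n * q := by
  constructor
  · rintro ⟨t, rfl⟩
    refine ⟨q.num * t, ?_⟩
    rw [Int.cast_mul, ← Rat.mul_den_eq_num]
    push_cast
    ring
  · rintro ⟨k, hk⟩
    rcases Nat.eq_zero_or_pos n with rfl | hn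
    · exact dvd_zero _
    have hq : q = Rat.divInt k n := by
      rw [Rat.divInt_eq_div, Int.cast_natCast, hk]
      field_simp
    exact Int.natCast_dvd_natCast.mp (hq ▸ Rat.den_dvd k n)

theorem Rat.den_dvd_iff_exists_pnat_eq_mul {q : ℚ} (hq : 0 < q) (n : ℕ+) :
    q.den ∣ n ↔ ∃ d : ℕ+, ((d : ℕ) : ℚ) = (n : ℚ) * q := by
  rw [Rat.den_dvd_iff_exists_intCast_eq_mul]
  constructor
  · rintro ⟨k, hk⟩
    have hk_pos : 0 < k := by exact_mod_cast hk ▸ (by positivity : (0 : ℚ) < n * q)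
    exact ⟨⟨k.toNat, by omega⟩, by rw [← hk]; exact_mod_cast Int.toNat_of_nonneg hk_pos.le⟩
  · rintro ⟨d, hd⟩
    exact ⟨d, by simpa using hd⟩

theorem Nat.eq_lcm_of_forall_le {a b c : ℕ} (hc : 0 < c) (hac : a ∣ c) (hbc : b ∣ c)
    (hmin : ∀ c' : ℕ, 0 < c' → a ∣ c' → b ∣ c' → c ≤ c') : c = Nat.lcm a b := by
  have hlcm : Nat.lcm a b ∣ c := Nat.lcm_dvd hac hbc
  exact le_antisymm (hmin _ (Nat.pos_of_dvd_of_pos hlcm hc) (Nat.dvd_lcm_left a b)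
    (Nat.dvd_lcm_right a b)) (Nat.le_of_dvd hc hlcm)

namespace QposxQ

theorem le_iff {x y : {a : ℚ // 0 < a} × ℚ} :
    le x y ↔ ∃ (n : ℕ+) (m : ℕ), y.1.1 = n * x.1.1 ∧ y.2 = n * x.2 + m := by
  have hx : x.1.1 ≠ 0 := x.1.2.ne'
  simp only [le, memP, mul, inv]
  constructor
  · rintro ⟨⟨n, hn⟩, m, hm⟩
    refine ⟨n, m, ?_, ?_⟩
    · rw [hn]; field_simp
    · rw [hm, hn]; field_simp; ring
  · rintro ⟨n, m, hy₁, hy₂⟩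
    refine ⟨⟨n, ?_⟩, m, ?_⟩
    · rw [hy₁]; field_simp
    · rw [hy₂, hy₁]; field_simp; ring

variable {x : {a : ℚ // 0 < a} × ℚ} {c d : ℕ+} {k : ℤ}

theorem le_lub (hac : x.1.1 = d / c) (hrc : x.2 = k / c) :
    le x (⟨(d : ℚ), by positivity⟩, ((max 0 k : ℤ) : ℚ)) := by
  have hm : (((max 0 k - k).toNat : ℕ) : ℚ) = ((max 0 k - k : ℤ) : ℚ) := by
    exact_mod_cast Int.toNat_of_nonneg (sub_nonneg.mpr (le_max_right 0 k))
  refine le_iff.mpr ⟨c, (max 0 k - k).toNat, ?_, ?_⟩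
  · rw [hac]; field_simp
  · rw [hrc, hm]; push_cast; field_simp; ring

theorem lub_le (hac : x.1.1 = d / c) (hrc : x.2 = k / c)
    (hc : (c : ℕ) = Nat.lcm x.1.1.den x.2.den) {z : {a : ℚ // 0 < a} × ℚ}
    (hz : memP z) (hxz : le x z) :
    le (⟨(d : ℚ), by positivity⟩, ((max 0 k : ℤ) : ℚ)) z := by
  obtain ⟨⟨b, hb⟩, s, hs⟩ := hz
  obtain ⟨n, m, hzn, hzm⟩ := le_iff.mp hxz
  have hcn : (c : ℕ) ∣ n := hc ▸ Nat.lcm_dvd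
    ((Rat.den_dvd_iff_exists_pnat_eq_mul x.1.2 n).mpr ⟨b, hb.trans hzn⟩)
    ((Rat.den_dvd_iff_exists_intCast_eq_mul _ n).mpr ⟨s - m, by push_cast; linarith⟩)
  obtain ⟨q, hq⟩ := hcn
  have hq_pos : 0 < q := Nat.pos_of_mul_pos_left (hq ▸ n.pos)
  have hz₁ : z.1.1 = q * d := by
    rw [hzn, hq, hac]; push_cast; field_simp
  have hz₂ : z.2 = ((q * k + m : ℤ) : ℚ) := by
    rw [hzm, hq, hrc]; push_cast; field_simp
  have hz₂_nonneg : 0 ≤ (q : ℤ) * k + m := by exact_mod_cast hz₂ ▸ hs ▸ s.cast_nonneg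
  have hm_nonneg : 0 ≤ (q : ℤ) * k + m - q * max 0 k := by
    rcases max_cases 0 k with ⟨h, _⟩ | ⟨h, _⟩ <;> rw [h] <;> linarith
  have hm' : ((((q : ℤ) * k + m - q * max 0 k).toNat : ℕ) : ℚ) =
      (((q : ℤ) * k + m - q * max 0 k : ℤ) : ℚ) := by
    exact_mod_cast Int.toNat_of_nonneg hm_nonneg
  refine le_iff.mpr ⟨⟨q, hq_pos⟩, ((q : ℤ) * k + m - q * max 0 k).toNat, hz₁, ?_⟩
  rw [hz₂, hm', PNat.mk_coe]
  push_cast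
  ring

theorem coe_eq_lcm_den_of_minimal (hac : x.1.1 = d / c) (hrc : x.2 = k / c)
    (hmin : ∀ c' : ℕ+, ((∃ d' : ℕ+, ((d' : ℕ) : ℚ) = (c' : ℚ) * x.1.1) ∧
      ∃ k' : ℤ, (k' : ℚ) = (c' : ℚ) * x.2) → c ≤ c') :
    (c : ℕ) = Nat.lcm x.1.1.den x.2.den := by
  refine Nat.eq_lcm_of_forall_le c.pos ?_ ?_ fun c' hc' ha hr ↦ hmin ⟨c', hc'⟩
    ⟨(Rat.den_dvd_iff_exists_pnat_eq_mul x.1.2 _).mp ha,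
      (Rat.den_dvd_iff_exists_intCast_eq_mul _ _).mp hr⟩
  · exact (Rat.den_dvd_iff_exists_pnat_eq_mul x.1.2 c).mpr ⟨d, by rw [hac]; field_simp⟩
  · exact (Rat.den_dvd_iff_exists_intCast_eq_mul _ _).mpr ⟨k, by rw [hrc]; field_simp⟩

theorem exists_eq_div_lcm_den (x : {a : ℚ // 0 < a} × ℚ) :
    ∃ (c d : ℕ+) (k : ℤ), x.1.1 = d / c ∧ x.2 = k / c ∧
      (c : ℕ) = Nat.lcm x.1.1.den x.2.den := by
  let c : ℕ+ := ⟨_, Nat.lcm_pos x.1.1.den_pos x.2.den_pos⟩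
  obtain ⟨d, hd⟩ := (Rat.den_dvd_iff_exists_pnat_eq_mul x.1.2 c).mp (Nat.dvd_lcm_left _ _)
  obtain ⟨k, hk⟩ := (Rat.den_dvd_iff_exists_intCast_eq_mul x.2 c).mp (Nat.dvd_lcm_right _ _)
  refine ⟨c, d, k, ?_, ?_, rfl⟩
  · rw [hd]; field_simp
  · rw [hk]; field_simp

theorem memP_lub (d : ℕ+) (k : ℤ) :
    memP (⟨(d : ℚ), by positivity⟩, ((max 0 k : ℤ) : ℚ)) :=
  ⟨⟨d, rfl⟩, (max 0 k).toNat,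
    (by exact_mod_cast Int.toNat_of_nonneg (le_max_left 0 k) :
      (((max 0 k).toNat : ℕ) : ℚ) = ((max 0 k : ℤ) : ℚ))⟩

end QposxQ

/-- `(ℚ₊^× ⋉ ℚ, ℕ^× ⋉ ℕ)` is lattice ordered: every element of `G` has a least
upper bound in `P`, and explicitly, if `(a,r) = (d/c, k/c)` with `c` minimal, then
the least upper bound is `(d, max 0 k)`. -/
theorem stmt3 :
    (∀ x : {a : ℚ // 0 < a} × ℚ, ∃ y : {a : ℚ // 0 < a} × ℚ,
      QposxQ.memP y ∧ QposxQ.le x y ∧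
      ∀ z, QposxQ.memP z → QposxQ.le x z → QposxQ.le y z) ∧
    (∀ (x : {a : ℚ // 0 < a} × ℚ) (c d : ℕ+) (k : ℤ),
      x.1.1 = (d : ℚ) / (c : ℚ) → x.2 = (k : ℚ) / (c : ℚ) →
      (∀ c' : ℕ+, ((∃ d' : ℕ+, ((d' : ℕ) : ℚ) = (c' : ℚ) * x.1.1) ∧
          ∃ k' : ℤ, (k' : ℚ) = (c' : ℚ) * x.2) → c ≤ c') →
      QposxQ.le x (⟨(d : ℚ), by positivity⟩, ((max 0 k : ℤ) : ℚ)) ∧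
      ∀ z, QposxQ.memP z → QposxQ.le x z →
        QposxQ.le (⟨(d : ℚ), by positivity⟩, ((max 0 k : ℤ) : ℚ)) z) := by
  refine ⟨fun x ↦ ?_, fun x c d k hac hrc hmin ↦
    ⟨QposxQ.le_lub hac hrc, fun _ ↦
      QposxQ.lub_le hac hrc (QposxQ.coe_eq_lcm_den_of_minimal hac hrc hmin)⟩⟩
  obtain ⟨c, d, k, hac, hrc, hc⟩ := QposxQ.exists_eq_div_lcm_den x
  exact ⟨_, QposxQ.memP_lub d k, QposxQ.le_lub hac hrc, fun _ ↦ QposxQ.lub_le hac hrc hc⟩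
end

section
/- Let S and {V_a : a ∈ ℕ^×} be isometries on a Hilbert space satisfying S V_a = V_a S^a, V_a V_b = V_{ab}, V_a* V_b = V_b V_a* when gcd(a,b)=1, and S* V_a = V_a (S*)^a. Suppose moreover V_a V_a* = 1 for all a. Then for each positive rational r = b/a (a,b ∈ ℕ^×), the element W_r := V_a S^b V_a* is a well-defined isometry: if b/a = d/c then V_a S^b V_a* = V_c S^d V_c*. -/
/-! Since `V_a` is unitary, conjugation by it preserves isometries, so `W_{b/a}` is an isometry.
For well-definedness, `S V_k = V_k S^k` gives `V_k S^{kn} V_k* = S^n`, hence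
`V_{ak} S^{bk} V_{ak}* = V_a (V_k S^{kb} V_k*) V_a* = V_a S^b V_a*`: the element depends only on
`b/a`, and both `b/a` and `d/c` scale to the common representative `bc/ac = ad/ac`. -/

section StarMonoid

variable {M : Type*} [Monoid M] [StarMul M]

theorem star_conj_mul_conj_eq_one {v x : M} (hv : star v * v = 1) (hv' : v * star v = 1)
    (hx : star x * x = 1) : star (v * x * star v) * (v * x * star v) = 1 := by
  calc star (v * x * star v) * (v * x * star v)
      = v * star x * (star v * v) * x * star v := by simp only [star_mul, star_star, mul_assoc]
    _ = 1 := by rw [hv, mul_one, mul_assoc v, hx, mul_one, hv']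

theorem mul_pow_mul_star_eq_pow {s v : M} {k : ℕ} (hsv : s * v = v * s ^ k)
    (hv : v * star v = 1) (n : ℕ) : v * s ^ (k * n) * star v = s ^ n := by
  have hsemiconj : SemiconjBy v (s ^ k) s := hsv.symm
  rw [pow_mul, (hsemiconj.pow_right n).eq, mul_assoc, hv, mul_one]

variable {s : M} {v : ℕ+ → M}

theorem conj_mul_pow_mul_eq (hsv : ∀ a : ℕ+, s * v a = v a * s ^ (a : ℕ))
    (hmul : ∀ a b : ℕ+, v a * v b = v (a * b)) (hv : ∀ a : ℕ+, v a * star (v a) = 1)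
    (a k : ℕ+) (n : ℕ) :
    v (a * k) * s ^ ((k : ℕ) * n) * star (v (a * k)) = v a * s ^ n * star (v a) := by
  calc v (a * k) * s ^ ((k : ℕ) * n) * star (v (a * k))
      = v a * (v k * s ^ ((k : ℕ) * n) * star (v k)) * star (v a) := by
        simp only [← hmul, star_mul, mul_assoc]
    _ = v a * s ^ n * star (v a) := by rw [mul_pow_mul_star_eq_pow (hsv k) (hv k)]

theorem conj_pow_eq_of_mul_eq_mul (hsv : ∀ a : ℕ+, s * v a = v a * s ^ (a : ℕ))
    (hmul : ∀ a b : ℕ+, v a * v b = v (a * b)) (hv : ∀ a : ℕ+, v a * star (v a) = 1)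
    {a b c d : ℕ+} (h : (b : ℕ) * c = a * d) :
    v a * s ^ (b : ℕ) * star (v a) = v c * s ^ (d : ℕ) * star (v c) := by
  calc v a * s ^ (b : ℕ) * star (v a)
      = v (a * c) * s ^ ((c : ℕ) * b) * star (v (a * c)) :=
        (conj_mul_pow_mul_eq hsv hmul hv a c b).symm
    _ = v (c * a) * s ^ ((a : ℕ) * d) * star (v (c * a)) := by
        rw [mul_comm a c, mul_comm _ (b : ℕ), h]
    _ = v c * s ^ (d : ℕ) * star (v c) := conj_mul_pow_mul_eq hsv hmul hv c a d

end StarMonoid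

theorem stmt8_general {H : Type*} [NormedAddCommGroup H] [InnerProductSpace ℂ H]
    [CompleteSpace H] (S : H →L[ℂ] H) (V : ℕ+ → H →L[ℂ] H)
    (hS : star S * S = 1) (hV : ∀ a, star (V a) * V a = 1)
    (hT1 : ∀ a : ℕ+, S * V a = V a * S ^ (a : ℕ))
    (hT2 : ∀ a b : ℕ+, V a * V b = V (a * b))
    (hT5 : ∀ a : ℕ+, V a * star (V a) = 1) :
    ∀ a b c d : ℕ+,
      star (V a * S ^ (b : ℕ) * star (V a)) * (V a * S ^ (b : ℕ) * star (V a)) = 1 ∧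
      ((b : ℕ) * (c : ℕ) = (a : ℕ) * (d : ℕ) →
        V a * S ^ (b : ℕ) * star (V a) = V c * S ^ (d : ℕ) * star (V c)) := by
  intro a b c d
  have hSpow : star (S ^ (b : ℕ)) * S ^ (b : ℕ) = 1 := by
    rw [star_pow]
    exact pow_mul_pow_eq_one _ hS
  exact ⟨star_conj_mul_conj_eq_one (hV a) (hT5 a) hSpow,
    conj_pow_eq_of_mul_eq_mul hT1 hT2 hT5⟩

/-- Under (T1)–(T4) and `V_a V_a* = 1`, the element `W_{b/a} := V_a S^b V_a*`
is a well-defined isometry. -/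
theorem stmt8 {H : Type*} [NormedAddCommGroup H] [InnerProductSpace ℂ H]
    [CompleteSpace H] (S : H →L[ℂ] H) (V : ℕ+ → H →L[ℂ] H)
    (hS : star S * S = 1) (hV : ∀ a, star (V a) * V a = 1)
    (hT1 : ∀ a : ℕ+, S * V a = V a * S ^ (a : ℕ))
    (hT2 : ∀ a b : ℕ+, V a * V b = V (a * b))
    (hT3 : ∀ a b : ℕ+, Nat.Coprime (a : ℕ) (b : ℕ) →
      star (V a) * V b = V b * star (V a))
    (hT4 : ∀ a : ℕ+, star S * V a = V a * (star S) ^ (a : ℕ))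
    (hT5 : ∀ a : ℕ+, V a * star (V a) = 1) :
    ∀ a b c d : ℕ+,
      star (V a * S ^ (b : ℕ) * star (V a)) * (V a * S ^ (b : ℕ) * star (V a)) = 1 ∧
      ((b : ℕ) * (c : ℕ) = (a : ℕ) * (d : ℕ) →
        V a * S ^ (b : ℕ) * star (V a) = V c * S ^ (d : ℕ) * star (V c)) :=
  stmt8_general S V hS hV hT1 hT2 hT5
end

section
/- Under the hypotheses of the previous statement (isometries S, V_a satisfying (T1)–(T4) and V_a V_a* = 1), the map W : ℚ₊ → B(H) defined by W_{b/a} = V_a S^b V_a* is a semigroup homomorphism: W_r W_s = W_{r+s} for all r, s ∈ ℚ₊. In particular, for r = b/a and s = d/c with a = a'g, c = c'g, g = gcd(a,c), one has (V_a S^b V_a*)(V_c S^d V_c*) = V_{ac'} S^{bc'+a'd} V_{ac'}*. -/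
/-!
Since `V_a` is an isometry with `V_a V_a* = 1`, (T1) gives `V_k S^{bk} V_k* = S^b V_k V_k* = S^b`,
so `W_{b/a} = V_a S^b V_a*` only depends on the fraction `b/a`: `W_{bk/ak} = W_{b/a}` by (T2).
Writing `W_r`, `W_s` over the common denominator `ac`, the product
`V_{ac} S^{bc} V_{ac}* V_{ac} S^{ad} V_{ac}*` collapses by `V_{ac}* V_{ac} = 1`.
-/

section FracPow

variable {M : Type*} [Monoid M] [StarMul M]

/-- The paper's `W_{b/a}`. -/
def fracPow (V : ℕ+ → M) (S : M) (a : ℕ+) (b : ℕ) : M :=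
  V a * S ^ b * star (V a)

theorem mul_pow_mul_mul_star_eq_pow {s v : M} {n : ℕ} (h : s * v = v * s ^ n)
    (hv : v * star v = 1) (b : ℕ) : v * s ^ (b * n) * star v = s ^ b := by
  have hsemiconj : SemiconjBy v (s ^ n) s := h.symm
  rw [pow_mul', hsemiconj.pow_right b, mul_assoc, hv, mul_one]

variable {V : ℕ+ → M} {S : M}

theorem fracPow_mul_mul (hT1 : ∀ a : ℕ+, S * V a = V a * S ^ (a : ℕ))
    (hT2 : ∀ a b : ℕ+, V a * V b = V (a * b)) (hT5 : ∀ a : ℕ+, V a * star (V a) = 1)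
    (a k : ℕ+) (b : ℕ) : fracPow V S (a * k) (b * k) = fracPow V S a b := by
  calc fracPow V S (a * k) (b * k)
      = V a * (V k * S ^ (b * k) * star (V k)) * star (V a) := by
        simp only [fracPow, ← hT2, star_mul, mul_assoc]
    _ = fracPow V S a b := by rw [mul_pow_mul_mul_star_eq_pow (hT1 k) (hT5 k), fracPow]

theorem fracPow_mul_fracPow_of_eq (hV : ∀ a, star (V a) * V a = 1) (a : ℕ+) (b d : ℕ) :
    fracPow V S a b * fracPow V S a d = fracPow V S a (b + d) := by
  calc fracPow V S a b * fracPow V S a d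
      = V a * S ^ b * (star (V a) * V a) * S ^ d * star (V a) := by
        simp only [fracPow, mul_assoc]
    _ = fracPow V S a (b + d) := by rw [hV, mul_one, mul_assoc _ (S ^ b), ← pow_add, fracPow]

theorem fracPow_mul_fracPow (hT1 : ∀ a : ℕ+, S * V a = V a * S ^ (a : ℕ))
    (hT2 : ∀ a b : ℕ+, V a * V b = V (a * b)) (hV : ∀ a, star (V a) * V a = 1)
    (hT5 : ∀ a : ℕ+, V a * star (V a) = 1) (a b c d : ℕ+) :
    fracPow V S a b * fracPow V S c d = fracPow V S (a * c) (b * c + a * d) := by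
  rw [← fracPow_mul_mul hT1 hT2 hT5 a c, ← fracPow_mul_mul hT1 hT2 hT5 c a, mul_comm c a,
    fracPow_mul_fracPow_of_eq hV, mul_comm (d : ℕ)]

end FracPow

theorem stmt9_general {H : Type*} [NormedAddCommGroup H] [InnerProductSpace ℂ H]
    [CompleteSpace H] (S : H →L[ℂ] H) (V : ℕ+ → H →L[ℂ] H)
    (hV : ∀ a, star (V a) * V a = 1)
    (hT1 : ∀ a : ℕ+, S * V a = V a * S ^ (a : ℕ))
    (hT2 : ∀ a b : ℕ+, V a * V b = V (a * b))
    (hT5 : ∀ a : ℕ+, V a * star (V a) = 1) :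
    (∀ a b c d : ℕ+,
      (V a * S ^ (b : ℕ) * star (V a)) * (V c * S ^ (d : ℕ) * star (V c)) =
        V (a * c) * S ^ ((b : ℕ) * (c : ℕ) + (a : ℕ) * (d : ℕ)) * star (V (a * c))) ∧
    (∀ a b c d a' c' g : ℕ+, (g : ℕ) = Nat.gcd (a : ℕ) (c : ℕ) →
      a = a' * g → c = c' * g →
      (V a * S ^ (b : ℕ) * star (V a)) * (V c * S ^ (d : ℕ) * star (V c)) =
        V (a * c') * S ^ ((b : ℕ) * (c' : ℕ) + (a' : ℕ) * (d : ℕ)) *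
          star (V (a * c'))) := by
  have hmul := fracPow_mul_fracPow hT1 hT2 hV hT5
  refine ⟨hmul, ?_⟩
  rintro a b c d a' c' g - rfl rfl
  have hden : a' * g * (c' * g) = a' * g * c' * g := by ring
  have hnum : (b : ℕ) * ↑(c' * g) + ↑(a' * g) * (d : ℕ) = (b * c' + a' * d) * g := by
    push_cast; ring
  calc fracPow V S (a' * g) b * fracPow V S (c' * g) d
      = fracPow V S (a' * g * c' * g) ((b * c' + a' * d) * g) := by rw [hmul, hden, hnum]
    _ = fracPow V S (a' * g * c') (b * c' + a' * d) := fracPow_mul_mul hT1 hT2 hT5 _ _ _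

/-- Under (T1)–(T5), `W_{b/a} := V_a S^b V_a*` is additive: `W_r W_s = W_{r+s}`.
In particular, with `g = gcd(a,c)`, `a = a' g`, `c = c' g`, one has
`(V_a S^b V_a*)(V_c S^d V_c*) = V_{ac'} S^{bc'+a'd} V_{ac'}*`. -/
theorem stmt9 {H : Type*} [NormedAddCommGroup H] [InnerProductSpace ℂ H]
    [CompleteSpace H] (S : H →L[ℂ] H) (V : ℕ+ → H →L[ℂ] H)
    (hS : star S * S = 1) (hV : ∀ a, star (V a) * V a = 1)
    (hT1 : ∀ a : ℕ+, S * V a = V a * S ^ (a : ℕ))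
    (hT2 : ∀ a b : ℕ+, V a * V b = V (a * b))
    (hT3 : ∀ a b : ℕ+, Nat.Coprime (a : ℕ) (b : ℕ) →
      star (V a) * V b = V b * star (V a))
    (hT4 : ∀ a : ℕ+, star S * V a = V a * (star S) ^ (a : ℕ))
    (hT5 : ∀ a : ℕ+, V a * star (V a) = 1) :
    (∀ a b c d : ℕ+,
      (V a * S ^ (b : ℕ) * star (V a)) * (V c * S ^ (d : ℕ) * star (V c)) =
        V (a * c) * S ^ ((b : ℕ) * (c : ℕ) + (a : ℕ) * (d : ℕ)) * star (V (a * c))) ∧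
    (∀ a b c d a' c' g : ℕ+, (g : ℕ) = Nat.gcd (a : ℕ) (c : ℕ) →
      a = a' * g → c = c' * g →
      (V a * S ^ (b : ℕ) * star (V a)) * (V c * S ^ (d : ℕ) * star (V c)) =
        V (a * c') * S ^ ((b : ℕ) * (c' : ℕ) + (a' : ℕ) * (d : ℕ)) *
          star (V (a * c'))) :=
  stmt9_general S V hV hT1 hT2 hT5
end

section
/- Let S = lim← ℤ/nℤ-indexed solenoid, realized as S = {(z_n)_{n∈ℕ^×} : z_n ∈ 𝕋 and n = mc ⟹ z_m = z_n^c}, with ℚ₊^× acting by ((a/b)·z)_n = z_{nb}^a for a,b ∈ ℕ^×. Then the action of ℚ₊^× on S \ {1} is free: if (a/b)·z = z and z ≠ 1 (the constant sequence 1), then a = b. -/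
/-! Comparing `(a/b)·z = z` with `z_m = z_{mb}^b` gives `z_{mb}^a = z_{mb}^b`, so every `z_{mb}` is
an `e`-th root of unity for `e = |a - b|`. If `a ≠ b`, then `e > 0` and `z_n = (z_{neb}^e)^b = 1`. -/

/-- Membership in the solenoid `S = lim← 𝕋`: a family `(z_n)_{n ∈ ℕ^×}` with
`z_m = z_{mc}^c`. -/
def inSolenoid (z : ℕ+ → Circle) : Prop := ∀ m c : ℕ+, z m = (z (m * c)) ^ (c : ℕ)

lemma pow_natAbs_sub_eq_one_of_pow_eq_pow {G : Type*} [Group G] {x : G} {a b : ℕ}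
    (h : x ^ a = x ^ b) : x ^ ((a : ℤ) - b).natAbs = 1 := by
  rw [pow_natAbs_eq_one, zpow_sub, zpow_natCast, zpow_natCast, h, mul_inv_cancel]

lemma inSolenoid.eq_one_of_forall_pow_eq_one {z : ℕ+ → Circle} (hz : inSolenoid z) {b e : ℕ+}
    (h : ∀ m, z (m * b) ^ (e : ℕ) = 1) (n : ℕ+) : z n = 1 := by
  rw [hz n (e * b), ← mul_assoc, PNat.mul_coe, pow_mul, h, one_pow]

/-- The action of `ℚ₊^×` on the solenoid minus the identity is free: if the
coordinatewise action of `a/b` fixes `z ≠ 1`, then `a = b`. -/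
theorem stmt16 (z : ℕ+ → Circle) (hz : inSolenoid z)
    (hz1 : ∃ n : ℕ+, z n ≠ 1) (a b : ℕ+)
    (hfix : ∀ n : ℕ+, (z (n * b)) ^ (a : ℕ) = z n) :
    a = b := by
  by_contra hne
  obtain ⟨n, hn⟩ := hz1
  have he : 0 < ((a : ℤ) - b).natAbs := by
    have : (a : ℕ) ≠ b := PNat.coe_injective.ne hne
    omega
  exact hn <| hz.eq_one_of_forall_pow_eq_one (e := ⟨_, he⟩)
    (fun m ↦ pow_natAbs_sub_eq_one_of_pow_eq_pow ((hfix m).trans (hz m b))) n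
end

section
/- Let S = {(z_n)_{n∈ℕ^×} : z_n ∈ 𝕋 and n = mc ⟹ z_m = z_n^c} be the solenoid (as a subspace of the product ∏_{n∈ℕ^×} 𝕋 with the product topology), with ℚ₊^× acting by ((a/b)·z)_n = z_{nb}^a. Then the orbit of every w ∈ S with w ≠ 1 is dense in S. -/
open Set Filter Topology

def solenoidOrbit (w : ℕ+ → Circle) : Set (ℕ+ → Circle) :=
  {z | ∃ a b : ℕ+, z = fun n => w (n * b) ^ (a : ℕ)}

theorem Circle.dense_of_infinite {H : Subgroup Circle} (hH : (H : Set Circle).Infinite) :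
    Dense (H : Set Circle) := by
  have : Fact (0 < 2 * Real.pi) := ⟨Real.two_pi_pos⟩
  -- transport the description of dense subgroups of `AddCircle` along `Real.Angle ≃ Circle`
  let toCircle : Real.Angle →+ Additive Circle :=
    AddMonoidHom.mk' (fun θ => Additive.ofMul θ.toCircle) fun θ₁ θ₂ =>
      congrArg Additive.ofMul (Real.Angle.toCircle_add θ₁ θ₂)
  let K := H.toAddSubgroup.comap toCircle
  have hK : AddCircle.homeomorphCircle' '' (K : Set Real.Angle) = H :=
    image_preimage_eq (H : Set Circle) AddCircle.homeomorphCircle'.surjective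
  rw [← hK]
  refine AddCircle.homeomorphCircle'.surjective.denseRange.dense_image
    AddCircle.homeomorphCircle'.continuous (AddCircle.dense_addSubgroup_iff_ne_zmultiples.2 ?_)
  intro a ha hKa
  have hfin := (addOrderOf_pos_iff.1 (Nat.pos_of_ne_zero ha)).finite_zmultiples
  rw [← hKa] at hfin
  exact hH (hK ▸ hfin.image _)

theorem zpowers_subset_closure_range_pow_succ {G : Type*} [Group G] [TopologicalSpace G]
    [CompactSpace G] [IsTopologicalGroup G] (x : G) :
    (Subgroup.zpowers x : Set G) ⊆ closure (range fun n : ℕ => x ^ (n + 1)) := by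
  intro y hy
  have hy' : x⁻¹ * y ∈ closure (range fun n : ℕ => x ^ n) := by
    rw [← closure_range_zpow_eq_pow, ← Subgroup.coe_zpowers]
    exact subset_closure (Subgroup.mul_mem _ (Subgroup.inv_mem _ (Subgroup.mem_zpowers x)) hy)
  simpa using map_mem_closure (continuous_const_mul x) hy' (by
    rintro _ ⟨n, rfl⟩
    exact ⟨n, pow_succ' x n⟩)

theorem Subgroup.infinite_of_forall_exists_pow_ne_one {G : Type*} [Group G] (H : Subgroup G)
    (h : ∀ k : ℕ, 0 < k → ∃ g ∈ H, g ^ k ≠ 1) : (H : Set G).Infinite := by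
  intro hfin
  have : Finite H := hfin.to_subtype
  obtain ⟨g, hg, hgk⟩ := h (Nat.card H) Nat.card_pos
  exact hgk (orderOf_dvd_iff_pow_eq_one.1 (H.orderOf_dvd_natCard hg))

namespace inSolenoid

variable {z : ℕ+ → Circle}

theorem apply_eq_pow_div (hz : inSolenoid z) {i N : ℕ+} (h : i ∣ N) :
    z i = z N ^ ((N : ℕ) / i) := by
  obtain ⟨c, rfl⟩ := h
  rw [PNat.mul_coe, Nat.mul_div_cancel_left _ i.pos]
  exact hz i c

theorem apply_mem_zpowers (hz : inSolenoid z) {i N : ℕ+} (h : i ∣ N) :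
    z i ∈ Subgroup.zpowers (z N) := by
  obtain ⟨c, rfl⟩ := h
  rw [hz i c]
  exact Subgroup.npow_mem_zpowers _ _

theorem solenoidOrbit_subset (hz : inSolenoid z) : solenoidOrbit z ⊆ {y | inSolenoid y} := by
  rintro _ ⟨a, b, rfl⟩ m c
  dsimp only
  rw [hz (m * b) c, mul_right_comm, ← pow_mul, ← pow_mul, mul_comm (c : ℕ)]

end inSolenoid

theorem solenoid_subset_closure_of_dense_image_apply {O : Set (ℕ+ → Circle)}
    (hO : O ⊆ {z | inSolenoid z}) (hdense : ∀ N, Dense ((fun z => z N) '' O)) :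
    {z | inSolenoid z} ⊆ closure O := by
  intro z hz
  rw [mem_closure_iff_nhds]
  intro U hU
  rw [nhds_pi] at hU
  obtain ⟨I, hI, t, ht, htU⟩ := Filter.mem_pi.1 hU
  let N : ℕ+ := ∏ i ∈ hI.toFinset, i
  have hdvd : ∀ i ∈ I, i ∣ N := fun i hi => Finset.dvd_prod_of_mem _ (hI.mem_toFinset.2 hi)
  -- `ψ (y N) i = y i` for `y` in the solenoid and `i ∣ N`; other coordinates are junk
  let ψ : Circle → ℕ+ → Circle := fun u n => u ^ ((N : ℕ) / n)
  have hψ : ψ ⁻¹' I.pi t ∈ 𝓝 (z N) := by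
    refine (continuous_pi fun n => continuous_pow _).continuousAt.preimage_mem_nhds
      (set_pi_mem_nhds hI fun i hi => ?_)
    rw [← hz.apply_eq_pow_div (hdvd i hi)]
    exact ht i
  obtain ⟨_, hyψ, y, hyO, rfl⟩ := mem_closure_iff_nhds.1 (hdense N (z N)) _ hψ
  refine ⟨y, htU fun i hi => ?_, hyO⟩
  rw [(hO hyO).apply_eq_pow_div (hdvd i hi)]
  exact hyψ i hi

theorem inSolenoid.dense_image_apply_solenoidOrbit {w : ℕ+ → Circle} (hw : inSolenoid w)
    (hw1 : ∃ n : ℕ+, w n ≠ 1) (N : ℕ+) : Dense ((fun z => z N) '' solenoidOrbit w) := by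
  obtain ⟨m, hm⟩ := hw1
  let H := ⨆ b : ℕ+, Subgroup.zpowers (w (N * b))
  have hdir : Directed (· ≤ ·) fun b : ℕ+ => Subgroup.zpowers (w (N * b)) := fun b b' =>
    ⟨b * b',
      Subgroup.zpowers_le.2 (hw.apply_mem_zpowers (mul_dvd_mul_left N (dvd_mul_right b b'))),
      Subgroup.zpowers_le.2 (hw.apply_mem_zpowers (mul_dvd_mul_left N (dvd_mul_left b' b)))⟩
  have hH : (H : Set Circle) ⊆ closure ((fun z => z N) '' solenoidOrbit w) := by
    rw [Subgroup.coe_iSup_of_directed hdir]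
    refine iUnion_subset fun b => (zpowers_subset_closure_range_pow_succ _).trans (closure_mono ?_)
    rintro _ ⟨n, rfl⟩
    exact ⟨_, ⟨n.succPNat, b, rfl⟩, rfl⟩
  have hinf : (H : Set Circle).Infinite := H.infinite_of_forall_exists_pow_ne_one fun k hk => by
    let k' : ℕ+ := ⟨k, hk⟩
    refine ⟨w (N * (m * k')), Subgroup.mem_iSup_of_mem (m * k') (Subgroup.mem_zpowers _),
      fun hk1 => hm ?_⟩
    rw [hw m (N * k'), mul_left_comm, PNat.mul_coe, pow_mul', PNat.mk_coe, hk1, one_pow]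
  exact dense_closure.1 ((Circle.dense_of_infinite hinf).mono hH)

/-- For any `w ≠ 1` in the solenoid, the `ℚ₊^×`-orbit of `w` is dense in the
solenoid (with the topology inherited from the product topology). -/
theorem stmt17 (w : ℕ+ → Circle) (hw : inSolenoid w) (hw1 : ∃ n : ℕ+, w n ≠ 1) :
    {z : ℕ+ → Circle | inSolenoid z} ⊆
      closure {z : ℕ+ → Circle |
        ∃ a b : ℕ+, z = fun n => (w (n * b)) ^ (a : ℕ)} :=
  solenoid_subset_closure_of_dense_image_apply hw.solenoidOrbit_subset
    (hw.dense_image_apply_solenoidOrbit hw1)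
end
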